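/- Let p : M → M' be a surjective submersion with connected fibers and Z₁, Z₂ projectable bivector fields on M with push-forwards Z₁', Z₂' on M'. Then the Schouten bracket [Z₁, Z₂] is a projectable trivector field, and its push-forward equals [Z₁', Z₂']. -/

import Mathlib

open Module

/-- Model of a surjective submersion with connected fibers:
p = snd : ℝ^l × ℝ^m → ℝ^m. -/
abbrev TotSp (l m : ℕ) := (Fin l → ℝ) × (Fin m → ℝ)

/-- Pullback of a covector on the base by p = snd. -/
noncomputable def pbCov (l m : ℕ) (g : Module.Dual ℝ (Fin m → ℝ)) :
    Module.Dual ℝ (TotSp l m) :=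
  g ∘ₗ LinearMap.snd ℝ (Fin l → ℝ) (Fin m → ℝ)

/-- The Schouten bracket of two bivector fields (bivectors as sharp maps
T*→T), evaluated at x on a triple of constant covectors:
[B,C](f,g,h) = ½ Σ_{cyclic in (f,g,h)} ( B♯f(C(g,h)) + C♯f(B(g,h)) ). -/
noncomputable def schouten (l m : ℕ)
    (B C : TotSp l m → (Module.Dual ℝ (TotSp l m) →ₗ[ℝ] TotSp l m))
    (x : TotSp l m) (f g h : Module.Dual ℝ (TotSp l m)) : ℝ :=
  (1/2) * ((fderiv ℝ (fun y => h (C y g)) x (B x f)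
              + fderiv ℝ (fun y => h (B y g)) x (C x f))
          + (fderiv ℝ (fun y => f (C y h)) x (B x g)
              + fderiv ℝ (fun y => f (B y h)) x (C x g))
          + (fderiv ℝ (fun y => g (C y f)) x (B x h)
              + fderiv ℝ (fun y => g (B y f)) x (C x h)))

/-- The Schouten bracket of bivector fields on the base ℝ^m. -/
noncomputable def schoutenBase (m : ℕ)
    (B C : (Fin m → ℝ) → (Module.Dual ℝ (Fin m → ℝ) →ₗ[ℝ] (Fin m → ℝ)))
    (y : Fin m → ℝ) (f g h : Module.Dual ℝ (Fin m → ℝ)) : ℝ :=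
  (1/2) * ((fderiv ℝ (fun w => h (C w g)) y (B y f)
              + fderiv ℝ (fun w => h (B w g)) y (C y f))
          + (fderiv ℝ (fun w => f (C w h)) y (B y g)
              + fderiv ℝ (fun w => f (B w h)) y (C y g))
          + (fderiv ℝ (fun w => g (C w f)) y (B y h)
              + fderiv ℝ (fun w => g (B w f)) y (C y h)))

lemma fderiv_comp_snd (l m : ℕ) (F : (Fin m → ℝ) → ℝ) (hF : Differentiable ℝ F)
    (x v : TotSp l m) :
    fderiv ℝ (fun y : TotSp l m => F y.2) x v = fderiv ℝ F x.2 v.2 := by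
  have h := ((hF x.2).hasFDerivAt.comp x (hasFDerivAt_snd)).fderiv
  rw [show (fun y : TotSp l m => F y.2) = F ∘ Prod.snd from rfl, h]
  rfl

lemma diff_eval (m : ℕ) (Z' : (Fin m → ℝ) → (Module.Dual ℝ (Fin m → ℝ) →ₗ[ℝ] (Fin m → ℝ)))
    (hsm : ∀ g : Module.Dual ℝ (Fin m → ℝ), ContDiff ℝ (⊤ : ℕ∞) fun y => Z' y g)
    (g g' : Module.Dual ℝ (Fin m → ℝ)) :
    Differentiable ℝ (fun w => g' (Z' w g)) := by
  exact (LinearMap.toContinuousLinearMap g').differentiable.comp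
    ((hsm g).differentiable (by simp))

lemma term_eq (l m : ℕ)
    (Za Zb : TotSp l m → (Module.Dual ℝ (TotSp l m) →ₗ[ℝ] TotSp l m))
    (Za' Zb' : (Fin m → ℝ) → (Module.Dual ℝ (Fin m → ℝ) →ₗ[ℝ] (Fin m → ℝ)))
    (hsmb' : ∀ g : Module.Dual ℝ (Fin m → ℝ), ContDiff ℝ (⊤ : ℕ∞) fun y => Zb' y g)
    (hproja : ∀ x (g : Module.Dual ℝ (Fin m → ℝ)), (Za x (pbCov l m g)).2 = Za' x.2 g)
    (hprojb : ∀ x (g : Module.Dual ℝ (Fin m → ℝ)), (Zb x (pbCov l m g)).2 = Zb' x.2 g)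
    (x : TotSp l m) (ga gb gc : Module.Dual ℝ (Fin m → ℝ)) :
    fderiv ℝ (fun y => pbCov l m gc (Zb y (pbCov l m gb))) x (Za x (pbCov l m ga))
      = fderiv ℝ (fun w => gc (Zb' w gb)) x.2 (Za' x.2 ga) := by
  have e : (fun y => pbCov l m gc (Zb y (pbCov l m gb)))
      = fun y : TotSp l m => gc (Zb' y.2 gb) := by
    funext y
    show gc ((Zb y (pbCov l m gb)).2) = _
    rw [hprojb]
  rw [e, fderiv_comp_snd l m _ (diff_eval m Zb' hsmb' gb gc), hproja]

/-- if Z₁, Z₂ are projectable bivector fields with push-forwards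
Z₁', Z₂' (projectability: p_* (Zᵢ x (p*g)) depends only on p(x) and equals
Zᵢ' (p x) g), then the Schouten bracket [Z₁, Z₂] is projectable and its
push-forward is [Z₁', Z₂'] (expressed by evaluating the bracket trivector on
triples of pulled-back covectors). -/
theorem stmt7 (l m : ℕ)
    (Z₁ Z₂ : TotSp l m → (Module.Dual ℝ (TotSp l m) →ₗ[ℝ] TotSp l m))
    (hsm₁ : ∀ f : Module.Dual ℝ (TotSp l m), ContDiff ℝ (⊤ : ℕ∞) fun x => Z₁ x f)
    (hsm₂ : ∀ f : Module.Dual ℝ (TotSp l m), ContDiff ℝ (⊤ : ℕ∞) fun x => Z₂ x f)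
    (hskew₁ : ∀ x (f g : Module.Dual ℝ (TotSp l m)), f (Z₁ x g) = - g (Z₁ x f))
    (hskew₂ : ∀ x (f g : Module.Dual ℝ (TotSp l m)), f (Z₂ x g) = - g (Z₂ x f))
    (Z₁' Z₂' : (Fin m → ℝ) → (Module.Dual ℝ (Fin m → ℝ) →ₗ[ℝ] (Fin m → ℝ)))
    (hsm₁' : ∀ g : Module.Dual ℝ (Fin m → ℝ), ContDiff ℝ (⊤ : ℕ∞) fun y => Z₁' y g)
    (hsm₂' : ∀ g : Module.Dual ℝ (Fin m → ℝ), ContDiff ℝ (⊤ : ℕ∞) fun y => Z₂' y g)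
    (hproj₁ : ∀ x (g : Module.Dual ℝ (Fin m → ℝ)), (Z₁ x (pbCov l m g)).2 = Z₁' x.2 g)
    (hproj₂ : ∀ x (g : Module.Dual ℝ (Fin m → ℝ)), (Z₂ x (pbCov l m g)).2 = Z₂' x.2 g) :
    ∀ x (g₁ g₂ g₃ : Module.Dual ℝ (Fin m → ℝ)),
      schouten l m Z₁ Z₂ x (pbCov l m g₁) (pbCov l m g₂) (pbCov l m g₃)
        = schoutenBase m Z₁' Z₂' x.2 g₁ g₂ g₃ := by
  intro x g₁ g₂ g₃
  unfold schouten schoutenBase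
  rw [term_eq l m Z₁ Z₂ Z₁' Z₂' hsm₂' hproj₁ hproj₂ x g₁ g₂ g₃,
      term_eq l m Z₂ Z₁ Z₂' Z₁' hsm₁' hproj₂ hproj₁ x g₁ g₂ g₃,
      term_eq l m Z₁ Z₂ Z₁' Z₂' hsm₂' hproj₁ hproj₂ x g₂ g₃ g₁,
      term_eq l m Z₂ Z₁ Z₂' Z₁' hsm₁' hproj₂ hproj₁ x g₂ g₃ g₁,
      term_eq l m Z₁ Z₂ Z₁' Z₂' hsm₂' hproj₁ hproj₂ x g₃ g₁ g₂,
      term_eq l m Z₂ Z₁ Z₂' Z₁' hsm₁' hproj₂ hproj₁ x g₃ g₁ g₂]
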